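/- arXiv:1007.3949 — 2 statements merged into one kernel-verified Lean document; each statement's English description precedes it below -/
import Mathlib

section
/- For all m×n complex matrices A and B and every k with 1 ≤ k ≤ min(m,n), the Ky Fan k-norm satisfies the triangle inequality: ‖A + B‖_{F_k} ≤ ‖A‖_{F_k} + ‖B‖_{F_k}. -/
open Matrix BigOperators

noncomputable def singularValues {α β : Type*} [Fintype α] [Fintype β] [DecidableEq α]
    (A : Matrix α β ℂ) : α → ℝ :=
  fun i => Real.sqrt ((Matrix.isHermitian_mul_conjTranspose_self A).eigenvalues i)

/-- The Ky Fan `k`-norm: the sum of the `k` largest singular values, expressed as the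
largest sum of singular values over index sets of size `k`. -/
noncomputable def kyFan {α β : Type*} [Fintype α] [Fintype β] [DecidableEq α]
    (k : ℕ) (A : Matrix α β ℂ) : ℝ :=
  sSup ((fun s : Finset α => ∑ i ∈ s, singularValues A i) '' {s | s.card = k})

/-!
For orthonormal families `u, v` of size `r`, `∑ i, Re ⟪u i, M v i⟫ ≤ ‖M‖_{F_r}`: expanding in the
singular bases of `M`, the left side is bounded by `∑ j, σ_j c_j` with weights `0 ≤ c_j ≤ 1` and
`∑ j, c_j ≤ r` (both by Bessel's inequality), and such a weighted sum is at most the sum of the `r`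
largest `σ_j`. Pairs of singular vectors of `A + B` attain `∑ σ_j(A + B)`, and splitting
`⟪u, (A + B) v⟫ = ⟪u, A v⟫ + ⟪u, B v⟫` gives the triangle inequality.
-/

open Finset
open scoped InnerProductSpace

lemma sum_mul_le_one_of_sum_sq_le_one {ι : Type*} {s : Finset ι} {p q : ι → ℝ}
    (hp : ∑ i ∈ s, p i ^ 2 ≤ 1) (hq : ∑ i ∈ s, q i ^ 2 ≤ 1) : ∑ i ∈ s, p i * q i ≤ 1 := by
  have hpq : ∑ i ∈ s, 2 * (p i * q i) ≤ ∑ i ∈ s, (p i ^ 2 + q i ^ 2) :=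
    sum_le_sum fun i _ => by linarith [two_mul_le_add_sq (p i) (q i)]
  rw [← mul_sum, sum_add_distrib] at hpq
  linarith

section TopSums

variable {ι : Type*} [Fintype ι]

lemma exists_card_eq_threshold (a : ι → ℝ) (ha : 0 ≤ a) {k : ℕ} (hk : k ≤ Fintype.card ι) :
    ∃ t : Finset ι, t.card = k ∧
      ∃ θ, 0 ≤ θ ∧ (∀ i ∈ t, θ ≤ a i) ∧ ∀ i ∉ t, a i ≤ θ := by
  classical
  induction k with
  | zero =>
    exact ⟨∅, rfl, ⨆ i, a i, Real.iSup_nonneg ha, by simp,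
      fun i _ => le_ciSup (Finite.bddAbove_range a) i⟩
  | succ k ih =>
    obtain ⟨t, rfl, θ, -, hθt, hθc⟩ := ih (by omega)
    obtain ⟨j, hj, hjmax⟩ := exists_max_image tᶜ a (by
      rw [← card_pos, card_compl]; omega)
    have hjt : j ∉ t := mem_compl.mp hj
    refine ⟨insert j t, card_insert_of_notMem hjt, a j, ha j, ?_, ?_⟩
    · intro i hi
      rcases mem_insert.mp hi with rfl | hi
      · exact le_rfl
      · exact (hθc j hjt).trans (hθt i hi)
    · intro i hi
      exact hjmax i (mem_compl.mpr fun h => hi (mem_insert_of_mem h))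

lemma sum_mul_le_sum_of_threshold {a c : ι → ℝ} {t : Finset ι} {θ : ℝ} (hθ : 0 ≤ θ)
    (hin : ∀ i ∈ t, θ ≤ a i) (hout : ∀ i ∉ t, a i ≤ θ)
    (hc0 : 0 ≤ c) (hc1 : c ≤ 1) (hc : ∑ i, c i ≤ t.card) :
    ∑ i, a i * c i ≤ ∑ i ∈ t, a i := by
  classical
  have hshift : ∑ i, (a i - θ) * c i ≤ ∑ i ∈ t, (a i - θ) := by
    rw [← sum_add_sum_compl t]
    refine add_le_of_le_of_nonpos (sum_le_sum fun i hi => ?_) (sum_nonpos fun i hi => ?_)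
    · exact mul_le_of_le_one_right (sub_nonneg.mpr (hin i hi)) (hc1 i)
    · exact mul_nonpos_of_nonpos_of_nonneg (sub_nonpos.mpr (hout i (mem_compl.mp hi))) (hc0 i)
  calc ∑ i, a i * c i = ∑ i, (a i - θ) * c i + θ * ∑ i, c i := by
        rw [mul_sum, ← sum_add_distrib]
        exact sum_congr rfl fun i _ => by ring
    _ ≤ ∑ i ∈ t, (a i - θ) + θ * t.card := add_le_add hshift (mul_le_mul_of_nonneg_left hc hθ)
    _ = ∑ i ∈ t, a i := by rw [sum_sub_distrib, sum_const, nsmul_eq_mul]; ring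

end TopSums

section KyFan

variable {α β : Type*} [Fintype α] [Fintype β] [DecidableEq α]

lemma singularValues_nonneg (M : Matrix α β ℂ) (i : α) : 0 ≤ singularValues M i :=
  Real.sqrt_nonneg _

lemma sq_singularValues (M : Matrix α β ℂ) (i : α) :
    singularValues M i ^ 2 = (isHermitian_mul_conjTranspose_self M).eigenvalues i :=
  Real.sq_sqrt (eigenvalues_self_mul_conjTranspose_nonneg M i)

lemma sum_singularValues_le_kyFan (M : Matrix α β ℂ) (s : Finset α) :
    ∑ i ∈ s, singularValues M i ≤ kyFan s.card M :=
  le_csSup ((Set.toFinite _).image _).bddAbove ⟨s, rfl, rfl⟩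

lemma kyFan_le {M : Matrix α β ℂ} {k : ℕ} {r : ℝ} (hk : k ≤ Fintype.card α)
    (h : ∀ s : Finset α, s.card = k → ∑ i ∈ s, singularValues M i ≤ r) : kyFan k M ≤ r := by
  obtain ⟨s, -, hs⟩ := exists_subset_card_eq (s := univ) (by simpa using hk)
  exact csSup_le ⟨_, s, hs, rfl⟩ (by rintro _ ⟨s, hs, rfl⟩; exact h s hs)

lemma kyFan_mono (M : Matrix α β ℂ) {k l : ℕ} (hkl : k ≤ l) (hl : l ≤ Fintype.card α) :
    kyFan k M ≤ kyFan l M := by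
  refine kyFan_le (hkl.trans hl) fun s hs => ?_
  obtain ⟨t, hst, rfl⟩ := exists_superset_card_eq (hs.trans_le hkl) (by simpa using hl)
  calc ∑ i ∈ s, singularValues M i ≤ ∑ i ∈ t, singularValues M i :=
        sum_le_sum_of_subset_of_nonneg hst fun i _ _ => singularValues_nonneg M i
    _ ≤ kyFan t.card M := sum_singularValues_le_kyFan M t

lemma sum_singularValues_mul_le_kyFan (M : Matrix α β ℂ) {c : α → ℝ} {k : ℕ}
    (hk : k ≤ Fintype.card α) (hc0 : 0 ≤ c) (hc1 : c ≤ 1) (hc : ∑ j, c j ≤ k) :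
    ∑ j, singularValues M j * c j ≤ kyFan k M := by
  obtain ⟨t, rfl, θ, hθ, hin, hout⟩ :=
    exists_card_eq_threshold (singularValues M) (singularValues_nonneg M) hk
  exact (sum_mul_le_sum_of_threshold hθ hin hout hc0 hc1 hc).trans
    (sum_singularValues_le_kyFan M t)

end KyFan

section SingularVectors

variable {α β : Type*} [Fintype α] [Fintype β] [DecidableEq α]

noncomputable def leftSingularBasis (M : Matrix α β ℂ) :
    OrthonormalBasis α ℂ (EuclideanSpace ℂ α) :=
  (isHermitian_mul_conjTranspose_self M).eigenvectorBasis

-- For `singularValues M j = 0` the junk value `0⁻¹ = 0` makes this vector `0`.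
noncomputable def rightSingularVector (M : Matrix α β ℂ) (j : α) : EuclideanSpace ℂ β :=
  (singularValues M j)⁻¹ • Mᴴ.toEuclideanLin (leftSingularBasis M j)

lemma toEuclideanLin_mul_conjTranspose_leftSingularBasis (M : Matrix α β ℂ) (j : α) :
    (M * Mᴴ).toEuclideanLin (leftSingularBasis M j) =
      (singularValues M j ^ 2 : ℝ) • leftSingularBasis M j := by
  rw [sq_singularValues, toLpLin_apply, leftSingularBasis, IsHermitian.mulVec_eigenvectorBasis]
  rfl

lemma inner_conjTranspose_leftSingularBasis (M : Matrix α β ℂ) (j l : α) :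
    ⟪Mᴴ.toEuclideanLin (leftSingularBasis M j), Mᴴ.toEuclideanLin (leftSingularBasis M l)⟫_ℂ =
      (singularValues M l ^ 2 : ℝ) * ⟪leftSingularBasis M j, leftSingularBasis M l⟫_ℂ := by
  classical
  rw [toEuclideanLin_conjTranspose_eq_adjoint, LinearMap.adjoint_inner_left,
    ← toEuclideanLin_conjTranspose_eq_adjoint, ← LinearMap.comp_apply, ← toLpLin_mul_same,
    toEuclideanLin_mul_conjTranspose_leftSingularBasis, inner_smul_right_eq_smul, Complex.real_smul]

lemma norm_conjTranspose_leftSingularBasis (M : Matrix α β ℂ) (j : α) :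
    ‖Mᴴ.toEuclideanLin (leftSingularBasis M j)‖ = singularValues M j := by
  have h := inner_conjTranspose_leftSingularBasis M j j
  rw [inner_self_eq_norm_sq_to_K, inner_self_eq_norm_sq_to_K,
    (leftSingularBasis M).orthonormal.1 j, RCLike.ofReal_one, one_pow, mul_one] at h
  norm_cast at h
  exact (pow_left_inj₀ (norm_nonneg _) (singularValues_nonneg M j) two_ne_zero).mp
    (RCLike.ofReal_injective h)

lemma rightSingularVector_of_singularValues_eq_zero {M : Matrix α β ℂ} {j : α}
    (hj : singularValues M j = 0) : rightSingularVector M j = 0 := by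
  rw [rightSingularVector, hj, _root_.inv_zero, zero_smul]

lemma smul_rightSingularVector (M : Matrix α β ℂ) (j : α) :
    singularValues M j • rightSingularVector M j = Mᴴ.toEuclideanLin (leftSingularBasis M j) := by
  by_cases hj : singularValues M j = 0
  · rw [rightSingularVector_of_singularValues_eq_zero hj, smul_zero, eq_comm, ← norm_eq_zero,
      norm_conjTranspose_leftSingularBasis, hj]
  · rw [rightSingularVector, smul_inv_smul₀ hj]

lemma orthonormal_rightSingularVector (M : Matrix α β ℂ) :
    Orthonormal ℂ fun j : {j // singularValues M j ≠ 0} => rightSingularVector M j := by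
  classical
  rw [orthonormal_iff_ite]
  rintro ⟨j, hj⟩ ⟨l, hl⟩
  simp only [rightSingularVector, inner_smul_left_eq_smul, inner_smul_right_eq_smul,
    inner_conjTranspose_leftSingularBasis, (leftSingularBasis M).inner_eq_ite, Subtype.mk.injEq]
  split_ifs with h
  · subst h
    simp only [Complex.real_smul]
    have hj' : (singularValues M j : ℂ) ≠ 0 := by exact_mod_cast hj
    push_cast
    field_simp
  · simp

lemma norm_rightSingularVector_le_one (M : Matrix α β ℂ) (j : α) :
    ‖rightSingularVector M j‖ ≤ 1 := by
  by_cases hj : singularValues M j = 0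
  · simp [rightSingularVector_of_singularValues_eq_zero hj]
  · exact ((orthonormal_rightSingularVector M).1 ⟨j, hj⟩).le

lemma sum_norm_inner_rightSingularVector_sq_le (M : Matrix α β ℂ) (v : EuclideanSpace ℂ β) :
    ∑ j, ‖⟪rightSingularVector M j, v⟫_ℂ‖ ^ 2 ≤ ‖v‖ ^ 2 := by
  classical
  rw [← Fintype.sum_subtype_add_sum_subtype (fun j => singularValues M j ≠ 0),
    Fintype.sum_eq_zero (α := {j // ¬singularValues M j ≠ 0}) _ fun j => by
      simp [rightSingularVector_of_singularValues_eq_zero (not_not.mp j.2)], add_zero]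
  exact (orthonormal_rightSingularVector M).sum_inner_products_le v

end SingularVectors

section VariationalBound

variable {α β : Type*} [Fintype α] [Fintype β] [DecidableEq α] [DecidableEq β]

lemma inner_leftSingularBasis_toEuclideanLin (M : Matrix α β ℂ) (j : α) (v : EuclideanSpace ℂ β) :
    ⟪leftSingularBasis M j, M.toEuclideanLin v⟫_ℂ =
      singularValues M j * ⟪rightSingularVector M j, v⟫_ℂ := by
  rw [← LinearMap.adjoint_inner_left, ← toEuclideanLin_conjTranspose_eq_adjoint,
    ← smul_rightSingularVector, inner_smul_left_eq_smul, Complex.real_smul]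

lemma inner_leftSingularBasis_toEuclideanLin_rightSingularVector (M : Matrix α β ℂ) (j : α) :
    ⟪leftSingularBasis M j, M.toEuclideanLin (rightSingularVector M j)⟫_ℂ = singularValues M j := by
  rw [inner_leftSingularBasis_toEuclideanLin]
  by_cases hj : singularValues M j = 0
  · simp [hj]
  · rw [inner_self_eq_norm_sq_to_K, (orthonormal_rightSingularVector M).1 ⟨j, hj⟩]
    simp

theorem sum_re_inner_toEuclideanLin_le_kyFan {ι : Type*} [Fintype ι] (M : Matrix α β ℂ)
    {u : ι → EuclideanSpace ℂ α} {v : ι → EuclideanSpace ℂ β}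
    (hu : Orthonormal ℂ u) (hv : Orthonormal ℂ v) :
    ∑ i, (⟪u i, M.toEuclideanLin (v i)⟫_ℂ).re ≤ kyFan (Fintype.card ι) M := by
  set w := leftSingularBasis M
  set x := rightSingularVector M
  set D : ι → α → ℝ := fun i j => ‖⟪w j, u i⟫_ℂ‖ * ‖⟪x j, v i⟫_ℂ‖
  have hcard : Fintype.card ι ≤ Fintype.card α := by
    simpa using hu.linearIndependent.fintype_card_le_finrank
  have hexpand : ∀ i, (⟪u i, M.toEuclideanLin (v i)⟫_ℂ).re ≤ ∑ j, singularValues M j * D i j := by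
    intro i
    rw [← w.sum_inner_mul_inner, Complex.re_sum]
    refine sum_le_sum fun j _ => ?_
    rw [inner_leftSingularBasis_toEuclideanLin]
    refine (Complex.re_le_norm _).trans_eq ?_
    rw [norm_mul, norm_mul, Complex.norm_real, Real.norm_of_nonneg (singularValues_nonneg M j),
      norm_inner_symm]
    ring
  have hcol : ∀ j, ∑ i, D i j ≤ 1 := by
    intro j
    refine sum_mul_le_one_of_sum_sq_le_one ?_ ?_
    · simp_rw [norm_inner_symm (w j)]
      simpa [w.orthonormal.1 j] using hu.sum_inner_products_le (w j) (s := univ)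
    · simp_rw [norm_inner_symm (x j)]
      refine (hv.sum_inner_products_le (x j)).trans ?_
      simpa using norm_rightSingularVector_le_one M j
  have hrow : ∀ i, ∑ j, D i j ≤ 1 := by
    intro i
    refine sum_mul_le_one_of_sum_sq_le_one ?_ ?_
    · simpa [hu.1 i] using w.orthonormal.sum_inner_products_le (u i) (s := univ)
    · simpa [hv.1 i] using sum_norm_inner_rightSingularVector_sq_le M (v i)
  calc ∑ i, (⟪u i, M.toEuclideanLin (v i)⟫_ℂ).re ≤ ∑ i, ∑ j, singularValues M j * D i j :=
        sum_le_sum fun i _ => hexpand i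
    _ = ∑ j, singularValues M j * ∑ i, D i j := by rw [sum_comm]; simp_rw [mul_sum]
    _ ≤ kyFan (Fintype.card ι) M := by
        refine sum_singularValues_mul_le_kyFan M hcard
          (fun j => sum_nonneg fun i _ => by positivity) hcol ?_
        rw [sum_comm]
        simpa using sum_le_sum fun i (_ : i ∈ univ) => hrow i

lemma exists_orthonormal_sum_re_inner_eq_sum_singularValues (M : Matrix α β ℂ) (s : Finset α) :
    ∃ t ⊆ s, ∃ (u : t → EuclideanSpace ℂ α) (v : t → EuclideanSpace ℂ β),
      Orthonormal ℂ u ∧ Orthonormal ℂ v ∧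
        ∑ i, (⟪u i, M.toEuclideanLin (v i)⟫_ℂ).re = ∑ i ∈ s, singularValues M i := by
  let t := s.filter fun i => singularValues M i ≠ 0
  let e : t ↪ {j // singularValues M j ≠ 0} :=
    Subtype.impEmbedding _ _ fun i hi => (mem_filter.mp hi).2
  refine ⟨t, filter_subset _ _, fun i => leftSingularBasis M i, fun i => rightSingularVector M i,
    (leftSingularBasis M).orthonormal.comp _ Subtype.val_injective,
    (orthonormal_rightSingularVector M).comp e e.injective, ?_⟩
  simp only [inner_leftSingularBasis_toEuclideanLin_rightSingularVector, Complex.ofReal_re,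
    sum_coe_sort, t, sum_filter_ne_zero]

end VariationalBound

theorem kyFan_triangle_general (m n k : ℕ) (hk : k ≤ min m n)
    (A B : Matrix (Fin m) (Fin n) ℂ) :
    kyFan k (A + B) ≤ kyFan k A + kyFan k B := by
  have hkm : k ≤ Fintype.card (Fin m) := by simpa using hk.trans (min_le_left m n)
  refine kyFan_le hkm fun s hs => ?_
  obtain ⟨t, hts, u, v, hu, hv, hsum⟩ :=
    exists_orthonormal_sum_re_inner_eq_sum_singularValues (A + B) s
  have htk : t.card ≤ k := hs ▸ card_le_card hts
  calc ∑ i ∈ s, singularValues (A + B) i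
      = ∑ i, (⟪u i, A.toEuclideanLin (v i)⟫_ℂ).re + ∑ i, (⟪u i, B.toEuclideanLin (v i)⟫_ℂ).re := by
        simp only [← hsum, map_add, LinearMap.add_apply, inner_add_right, Complex.add_re,
          sum_add_distrib]
    _ ≤ kyFan t.card A + kyFan t.card B := by
        simpa using add_le_add (sum_re_inner_toEuclideanLin_le_kyFan A hu hv)
          (sum_re_inner_toEuclideanLin_le_kyFan B hu hv)
    _ ≤ kyFan k A + kyFan k B := add_le_add (kyFan_mono A htk hkm) (kyFan_mono B htk hkm)

theorem kyFan_triangle (m n k : ℕ) (hk1 : 1 ≤ k) (hk : k ≤ min m n)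
    (A B : Matrix (Fin m) (Fin n) ℂ) :
    kyFan k (A + B) ≤ kyFan k A + kyFan k B :=
  kyFan_triangle_general m n k hk A B
end

section
/- Let n ≥ m ≥ k ≥ 1 be integers and let A be an m×n matrix with entries in {0,1}. Then the sum of the k largest singular values of A satisfies ‖A‖_{F_k} ≤ (1/2)(1 + √k)√(mn). -/
/-!
Let `σ` be the singular values of `A` and `E = ∑ |aᵢⱼ|² = ∑ σᵢ²`; for a `(0,1)`-matrix `E` is also
the sum of all entries `𝟙ᵀ A 𝟙`. Testing `A Aᴴ` against the all-ones vector gives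
`E ≤ σ_max √(mn)`. By Cauchy–Schwarz, any `k` singular values sum to at most
`σ_max + √((k - 1) (E - σ_max²)) ≤ σ_max + √((k - 1) σ_max (√(mn) - σ_max))`,
and maximizing over `σ_max` gives `(1 + √k) √(mn) / 2`.
-/

open Matrix BigOperators

open Finset
open scoped MatrixOrder ComplexOrder

namespace Matrix

section Rayleigh

variable {𝕜 n : Type*} [RCLike 𝕜] [Fintype n] [DecidableEq n]

theorem IsHermitian.le_algebraMap_of_eigenvalues_le {B : Matrix n n 𝕜} (hB : B.IsHermitian)
    {μ : ℝ} (hμ : ∀ i, hB.eigenvalues i ≤ μ) : B ≤ algebraMap ℝ (Matrix n n 𝕜) μ :=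
  le_algebraMap_of_spectrum_le
    (by rw [hB.spectrum_real_eq_range_eigenvalues]; rintro _ ⟨i, rfl⟩; exact hμ i) hB

theorem IsHermitian.dotProduct_mulVec_le {B : Matrix n n 𝕜} (hB : B.IsHermitian)
    {μ : ℝ} (hμ : ∀ i, hB.eigenvalues i ≤ μ) (x : n → 𝕜) :
    star x ⬝ᵥ B *ᵥ x ≤ μ * (star x ⬝ᵥ x) := by
  have hpsd := (le_iff.mp (hB.le_algebraMap_of_eigenvalues_le hμ)).dotProduct_mulVec_nonneg x
  rwa [sub_mulVec, dotProduct_sub, sub_nonneg, Algebra.algebraMap_eq_smul_one, smul_mulVec,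
    one_mulVec, dotProduct_smul, RCLike.real_smul_eq_coe_mul] at hpsd

end Rayleigh

section SingularValues

variable {m n : Type*} [Fintype m] [Fintype n] [DecidableEq m]

theorem sq_singularValues (A : Matrix m n ℂ) (i : m) :
    singularValues A i ^ 2 = (isHermitian_mul_conjTranspose_self A).eigenvalues i :=
  Real.sq_sqrt (eigenvalues_self_mul_conjTranspose_nonneg A i)

theorem sum_sq_singularValues (A : Matrix m n ℂ) :
    ∑ i, singularValues A i ^ 2 = ∑ i, ∑ j, ‖A i j‖ ^ 2 := by
  have htrace := (isHermitian_mul_conjTranspose_self A).trace_eq_sum_eigenvalues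
  simp only [trace, diag, mul_apply, conjTranspose_apply, RCLike.star_def,
    RCLike.mul_conj] at htrace
  simp only [sq_singularValues]
  exact_mod_cast htrace.symm

theorem norm_sum_sq_le_of_eigenvalues_le (A : Matrix m n ℂ) {μ : ℝ}
    (hμ : ∀ i, (isHermitian_mul_conjTranspose_self A).eigenvalues i ≤ μ) :
    ‖∑ i, ∑ j, A i j‖ ^ 2 ≤ Fintype.card m * Fintype.card n * μ := by
  set u : n → ℂ := Aᴴ *ᵥ fun _ => 1
  have hsum : ∑ i, ∑ j, A i j = ∑ j, star (u j) := by
    simp only [u, mulVec, dotProduct, conjTranspose_apply, mul_one, star_sum, star_star]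
    exact Finset.sum_comm
  have hquad : ∑ j, ‖u j‖ ^ 2 ≤ Fintype.card m * μ := by
    have hray := (isHermitian_mul_conjTranspose_self A).dotProduct_mulVec_le hμ fun _ => 1
    have hu : (star fun _ => (1 : ℂ)) ᵥ* A = star u := by simp [u, star_mulVec]
    have huu : star u ⬝ᵥ u = ((∑ j, ‖u j‖ ^ 2 : ℝ) : ℂ) := by
      simp [dotProduct, RCLike.conj_mul]
    have hone : (star fun _ => (1 : ℂ)) ⬝ᵥ (fun _ : m => 1) = Fintype.card m := by
      simp [dotProduct]
    rw [← mulVec_mulVec, dotProduct_mulVec, hu, huu, hone] at hray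
    simpa [mul_comm, ← Complex.ofReal_pow] using (Complex.le_def.mp hray).1
  calc ‖∑ i, ∑ j, A i j‖ ^ 2 ≤ (∑ j, ‖u j‖) ^ 2 := by
        rw [hsum]; gcongr; exact (norm_sum_le _ _).trans_eq (by simp)
    _ ≤ Fintype.card n * ∑ j, ‖u j‖ ^ 2 := by
        simpa only [card_univ] using sq_sum_le_card_mul_sum_sq (s := univ) (f := fun j => ‖u j‖)
    _ ≤ Fintype.card n * (Fintype.card m * μ) := by gcongr
    _ = _ := by ring

theorem norm_sum_le_singularValues_mul_sqrt_card (A : Matrix m n ℂ) {i₀ : m}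
    (hi₀ : ∀ i, singularValues A i ≤ singularValues A i₀) :
    ‖∑ i, ∑ j, A i j‖ ≤ singularValues A i₀ * √(Fintype.card m * Fintype.card n) := by
  have h := A.norm_sum_sq_le_of_eigenvalues_le (μ := singularValues A i₀ ^ 2) fun i => by
    rw [← sq_singularValues]
    exact pow_le_pow_left₀ (Real.sqrt_nonneg _) (hi₀ i) 2
  have hσ₀ : 0 ≤ singularValues A i₀ := Real.sqrt_nonneg _
  refine le_of_pow_le_pow_left₀ two_ne_zero (by positivity) ?_
  rw [mul_pow, Real.sq_sqrt (by positivity)]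
  linarith

end SingularValues

theorem norm_sum_eq_sum_sum_sq_norm_of_zero_one {m n : Type*} [Fintype m] [Fintype n]
    {A : Matrix m n ℂ} (hA : ∀ i j, A i j = 0 ∨ A i j = 1) :
    ‖∑ i, ∑ j, A i j‖ = ∑ i, ∑ j, ‖A i j‖ ^ 2 := by
  have hA' : ∑ i, ∑ j, A i j = ((∑ i, ∑ j, ‖A i j‖ ^ 2 : ℝ) : ℂ) := by
    simp only [Complex.ofReal_sum]
    refine sum_congr rfl fun i _ => sum_congr rfl fun j _ => ?_
    rcases hA i j with h | h <;> simp [h]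
  rw [hA', Complex.norm_of_nonneg (by positivity)]

end Matrix

theorem Finset.sum_le_add_sqrt_mul_sum_sq_erase {ι : Type*} [Fintype ι] [DecidableEq ι]
    {f : ι → ℝ} {i₀ : ι} (hi₀ : ∀ i, f i ≤ f i₀) {s : Finset ι} (hs : s.Nonempty) :
    ∑ i ∈ s, f i ≤ f i₀ + √((#s - 1) * ∑ i ∈ univ.erase i₀, f i ^ 2) := by
  obtain ⟨j, hj, hi₀j⟩ : ∃ j ∈ s, i₀ ∉ s.erase j := by
    by_cases h : i₀ ∈ s
    · exact ⟨i₀, h, notMem_erase _ _⟩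
    · obtain ⟨j, hj⟩ := hs
      exact ⟨j, hj, fun h' => h (mem_of_mem_erase h')⟩
  have hsub : s.erase j ⊆ univ.erase i₀ := fun i hi =>
    mem_erase.2 ⟨fun h => hi₀j (h ▸ hi), mem_univ i⟩
  have hcard : (#(s.erase j) : ℝ) = #s - 1 := by
    rw [card_erase_of_mem hj, Nat.cast_pred hs.card_pos]
  calc ∑ i ∈ s, f i = f j + ∑ i ∈ s.erase j, f i := (add_sum_erase s f hj).symm
    _ ≤ f i₀ + √(#(s.erase j) * ∑ i ∈ s.erase j, f i ^ 2) :=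
        add_le_add (hi₀ j) (Real.le_sqrt_of_sq_le sq_sum_le_card_mul_sum_sq)
    _ ≤ f i₀ + √((#s - 1) * ∑ i ∈ univ.erase i₀, f i ^ 2) := by
        rw [hcard]
        gcongr
        exact hcard ▸ Nat.cast_nonneg _

theorem add_sqrt_mul_le_of_sq_add_le_mul {k t R S : ℝ} (hk : 1 ≤ k) (hR : 0 ≤ R) (hS : 0 ≤ S)
    (htRS : t ^ 2 + R ≤ t * S) :
    t + √((k - 1) * R) ≤ 1 / 2 * (1 + √k) * S := by
  set r := √k
  have hr : 1 ≤ r := Real.one_le_sqrt.mpr hk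
  have hrk : r ^ 2 = k := Real.sq_sqrt (by linarith)
  have htS : t ≤ S := by nlinarith
  have hRS : (k - 1) * R ≤ (1 / 2 * (1 + r) * S - t) ^ 2 := by
    -- `((1 + r) S / 2 - t) ^ 2 - (r ^ 2 - 1) (t S - t ^ 2) = ((1 + r) S / 2 - r t) ^ 2`
    nlinarith [sq_nonneg ((1 + r) * S / 2 - r * t),
      mul_le_mul_of_nonneg_left htRS (by linarith : 0 ≤ k - 1)]
  calc t + √((k - 1) * R) ≤ t + (1 / 2 * (1 + r) * S - t) := by
        gcongr
        exact (Real.sqrt_le_left (by nlinarith)).2 hRS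
    _ = 1 / 2 * (1 + r) * S := by ring

theorem kyFan_le_of_zero_one_general (m n k : ℕ)
    (A : Matrix (Fin m) (Fin n) ℂ) (hA : ∀ i j, A i j = 0 ∨ A i j = 1) :
    kyFan k A ≤ (1 / 2) * (1 + Real.sqrt k) * Real.sqrt (m * n) := by
  refine Real.sSup_le ?_ (by positivity)
  rintro _ ⟨s, rfl, rfl⟩
  obtain rfl | hs := s.eq_empty_or_nonempty
  · simp only [sum_empty]
    positivity
  have : Nonempty (Fin m) := ⟨hs.choose⟩
  obtain ⟨i₀, hi₀⟩ := Finite.exists_max (singularValues A)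
  have hES := A.norm_sum_le_singularValues_mul_sqrt_card hi₀
  rw [norm_sum_eq_sum_sum_sq_norm_of_zero_one hA, ← A.sum_sq_singularValues,
    ← add_sum_erase univ (fun i => singularValues A i ^ 2) (mem_univ i₀), Fintype.card_fin,
    Fintype.card_fin] at hES
  calc ∑ i ∈ s, singularValues A i
      ≤ singularValues A i₀ + √((#s - 1) * ∑ i ∈ univ.erase i₀, singularValues A i ^ 2) :=
        sum_le_add_sqrt_mul_sum_sq_erase hi₀ hs
    _ ≤ 1 / 2 * (1 + √(#s)) * √(m * n) :=
        add_sqrt_mul_le_of_sq_add_le_mul (by exact_mod_cast hs.card_pos) (by positivity)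
          (by positivity) hES

theorem kyFan_le_of_zero_one (m n k : ℕ) (hk1 : 1 ≤ k) (hkm : k ≤ m) (hmn : m ≤ n)
    (A : Matrix (Fin m) (Fin n) ℂ) (hA : ∀ i j, A i j = 0 ∨ A i j = 1) :
    kyFan k A ≤ (1 / 2) * (1 + Real.sqrt k) * Real.sqrt (m * n) :=
  kyFan_le_of_zero_one_general m n k A hA
end
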